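/- (Construction of the cut-off functions ψ_ε, formula (2.9)) Let n ≥ 1 and let S ⊆ ℝⁿ have zero 2-capacity. Then for every ε > 0 and every open set B ⊇ S there exists a Lipschitz continuous function ψ : ℝⁿ → ℝ such that: 0 ≤ ψ ≤ 1 on ℝⁿ; ψ = 0 on an open neighborhood of S; ψ = 1 on ℝⁿ \ B; and ∫_{ℝⁿ} ‖Dψ(x)‖² dx ≤ 4ε, where Dψ(x) denotes the derivative of ψ at x (which exists for almost every x, ψ being Lipschitz), interpreted as 0 at points of non-differentiability. -/

import Mathlib

/-!
Take a test function `φ` from the definition of zero capacity (for `ε` and `B`) and put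
`ψ := T ∘ φ`. Since `T` is `2`-Lipschitz, `ψ` is Lipschitz and `‖Dψ‖ ≤ 2 ‖Dφ‖` pointwise (also
where `ψ` fails to be differentiable, as `fderiv` is `0` there), so `∫ ‖Dψ‖² ≤ 4 ∫ ‖∇φ‖² < 4ε`.
Moreover `T ∘ φ = 0` where `φ ≥ 1`, i.e. near `S`, and `T ∘ φ = 1` where `φ = 0`, i.e. off `B`.
-/

open MeasureTheory Set

noncomputable section

/-- A set `S ⊆ ℝⁿ` has zero 2-capacity: for every `ε > 0` and every open `B ⊇ S` there is a
smooth compactly supported `φ` with support in `B`, `φ ≥ 1` on a neighborhood of `S`, and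
`∫ ‖∇φ‖² < ε`. -/
def ZeroCap2 {n : ℕ} (S : Set (EuclideanSpace ℝ (Fin n))) : Prop :=
  ∀ ε > (0:ℝ), ∀ B : Set (EuclideanSpace ℝ (Fin n)), IsOpen B → S ⊆ B →
    ∃ φ : EuclideanSpace ℝ (Fin n) → ℝ, ContDiff ℝ (⊤ : ℕ∞) φ ∧ HasCompactSupport φ ∧
      tsupport φ ⊆ B ∧ (∃ V, IsOpen V ∧ S ⊆ V ∧ ∀ x ∈ V, 1 ≤ φ x) ∧
      ∫ x, ‖gradient φ x‖ ^ 2 < ε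

open Filter Topology
open scoped NNReal

/-- The truncation `T`. -/
def cutoffProfile (s : ℝ) : ℝ := max 0 (min 1 (1 - 2 * s))

theorem lipschitzWith_cutoffProfile : LipschitzWith 2 cutoffProfile := by
  have affine : LipschitzWith 2 fun s : ℝ => 1 - 2 * s :=
    LipschitzWith.of_dist_le_mul fun a b => by
      simp only [Real.dist_eq, NNReal.coe_ofNat]
      rw [show 1 - 2 * a - (1 - 2 * b) = 2 * (b - a) by ring, abs_mul, abs_sub_comm]
      norm_num
  exact (affine.const_min 1).const_max 0

theorem cutoffProfile_mem_Icc (s : ℝ) : cutoffProfile s ∈ Icc 0 1 :=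
  ⟨le_max_left _ _, max_le zero_le_one (min_le_left _ _)⟩

theorem cutoffProfile_of_nonpos {s : ℝ} (hs : s ≤ 0) : cutoffProfile s = 1 := by
  rw [cutoffProfile, min_eq_left (by linarith), max_eq_right zero_le_one]

theorem cutoffProfile_of_half_le {s : ℝ} (hs : 1 / 2 ≤ s) : cutoffProfile s = 0 := by
  rw [cutoffProfile, min_eq_right (by linarith), max_eq_left (by linarith)]

section
variable {𝕜 E F G : Type*} [NontriviallyNormedField 𝕜]
  [NormedAddCommGroup E] [NormedSpace 𝕜 E] [NormedAddCommGroup F] [NormedSpace 𝕜 F]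
  [NormedAddCommGroup G] [NormedSpace 𝕜 G]

theorem HasFDerivAt.eventually_norm_sub_le {f : E → F} {f' : E →L[𝕜] F} {x : E}
    (hf : HasFDerivAt f f' x) {η : ℝ} (hη : 0 < η) :
    ∀ᶠ y in 𝓝 x, ‖f y - f x‖ ≤ (‖f'‖ + η) * ‖y - x‖ := by
  filter_upwards [hf.isLittleO.def hη] with y hy
  calc ‖f y - f x‖ ≤ ‖f y - f x - f' (y - x)‖ + ‖f' (y - x)‖ := norm_le_norm_sub_add _ _
    _ ≤ η * ‖y - x‖ + ‖f'‖ * ‖y - x‖ := add_le_add hy (f'.le_opNorm _)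
    _ = (‖f'‖ + η) * ‖y - x‖ := by ring

theorem norm_fderiv_comp_le_of_lipschitzWith {f : E → F} {g : F → G} {K : ℝ≥0} {x : E}
    (hg : LipschitzWith K g) (hf : DifferentiableAt 𝕜 f x) :
    ‖fderiv 𝕜 (g ∘ f) x‖ ≤ K * ‖fderiv 𝕜 f x‖ := by
  refine le_of_forall_pos_le_add fun δ hδ => ?_
  have hη : 0 < δ / (K + 1) := by positivity
  refine norm_fderiv_le_of_lip' 𝕜 (by positivity) ?_
  filter_upwards [hf.hasFDerivAt.eventually_norm_sub_le hη] with y hy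
  have hKη : (K : ℝ) * (δ / (K + 1)) ≤ δ := by
    rw [mul_div_assoc']
    exact div_le_of_le_mul₀ (by positivity) hδ.le (by nlinarith)
  calc ‖g (f y) - g (f x)‖ ≤ K * ‖f y - f x‖ := hg.norm_sub_le _ _
    _ ≤ K * ((‖fderiv 𝕜 f x‖ + δ / (K + 1)) * ‖y - x‖) := by gcongr
    _ ≤ (K * ‖fderiv 𝕜 f x‖ + δ) * ‖y - x‖ := by
      rw [← mul_assoc, mul_add]; gcongr
end

section
variable {E F : Type*} [NormedAddCommGroup E] [NormedSpace ℝ E] [MeasurableSpace E]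
  [OpensMeasurableSpace E] [NormedAddCommGroup F] [NormedSpace ℝ F]

theorem lintegral_norm_fderiv_comp_sq_le {μ : Measure E} [IsFiniteMeasureOnCompacts μ]
    {φ : E → F} (hφ : ContDiff ℝ 1 φ) (hcs : HasCompactSupport φ) {g : F → ℝ} {K : ℝ≥0}
    (hg : LipschitzWith K g) :
    ∫⁻ x, ENNReal.ofReal (‖fderiv ℝ (g ∘ φ) x‖ ^ 2) ∂μ ≤
      ENNReal.ofReal (K ^ 2 * ∫ x, ‖fderiv ℝ φ x‖ ^ 2 ∂μ) := by
  have hcs' : HasCompactSupport fun x => (K : ℝ) ^ 2 * ‖fderiv ℝ φ x‖ ^ 2 :=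
    (hcs.fderiv ℝ).comp_left (g := fun L => (K : ℝ) ^ 2 * ‖L‖ ^ 2) (by simp)
  have hintegrable : Integrable (fun x => (K : ℝ) ^ 2 * ‖fderiv ℝ φ x‖ ^ 2) μ :=
    Continuous.integrable_of_hasCompactSupport
      (continuous_const.mul ((hφ.continuous_fderiv one_ne_zero).norm.pow 2)) hcs'
  rw [← integral_const_mul, ofReal_integral_eq_lintegral_ofReal hintegrable
    (Eventually.of_forall fun x => by positivity)]
  refine lintegral_mono fun x => ENNReal.ofReal_le_ofReal ?_
  rw [← mul_pow]
  exact pow_le_pow_left₀ (norm_nonneg _)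
    (norm_fderiv_comp_le_of_lipschitzWith hg (hφ.differentiable one_ne_zero x)) 2
end

theorem cutoff_construction_general
    (n : ℕ)
    (S : Set (EuclideanSpace ℝ (Fin n))) (hS : ZeroCap2 S) :
    ∀ ε > (0:ℝ), ∀ B : Set (EuclideanSpace ℝ (Fin n)), IsOpen B → S ⊆ B →
      ∃ ψ : EuclideanSpace ℝ (Fin n) → ℝ,
        (∃ K, LipschitzWith K ψ) ∧
        (∀ x, 0 ≤ ψ x ∧ ψ x ≤ 1) ∧
        (∃ V, IsOpen V ∧ S ⊆ V ∧ ∀ x ∈ V, ψ x = 0) ∧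
        (∀ x ∉ B, ψ x = 1) ∧
        ∫⁻ x, ENNReal.ofReal (‖fderiv ℝ ψ x‖ ^ 2) ≤ ENNReal.ofReal (4 * ε) := by
  intro ε hε B hB hSB
  obtain ⟨φ, hφ, hcs, hsupp, ⟨V, hV, hSV, hφV⟩, hint⟩ := hS ε hε B hB hSB
  have hφ₁ : ContDiff ℝ 1 φ := hφ.of_le (by norm_num)
  obtain ⟨K, hK⟩ := hφ₁.lipschitzWith_of_hasCompactSupport hcs one_ne_zero
  refine ⟨cutoffProfile ∘ φ, ⟨2 * K, lipschitzWith_cutoffProfile.comp hK⟩,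
    fun x => cutoffProfile_mem_Icc (φ x),
    ⟨V, hV, hSV, fun x hx => cutoffProfile_of_half_le (by linarith [hφV x hx])⟩,
    fun x hx => cutoffProfile_of_nonpos (image_eq_zero_of_notMem_tsupport (hsupp.mt hx)).le, ?_⟩
  have hgrad : ∀ x, ‖gradient φ x‖ = ‖fderiv ℝ φ x‖ := fun x => by simp [gradient]
  calc ∫⁻ x, ENNReal.ofReal (‖fderiv ℝ (cutoffProfile ∘ φ) x‖ ^ 2)
      ≤ ENNReal.ofReal ((2 : ℝ≥0) ^ 2 * ∫ x, ‖fderiv ℝ φ x‖ ^ 2) :=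
        lintegral_norm_fderiv_comp_sq_le hφ₁ hcs lipschitzWith_cutoffProfile
    _ = ENNReal.ofReal (4 * ∫ x, ‖gradient φ x‖ ^ 2) := by simp only [hgrad]; norm_num
    _ ≤ ENNReal.ofReal (4 * ε) := ENNReal.ofReal_le_ofReal (by linarith)

/-- Construction of the cut-off functions `ψ_ε` (formula (2.9)): if `S` has zero 2-capacity,
then for every `ε > 0` and every open `B ⊇ S` there is a Lipschitz function `ψ` with
`0 ≤ ψ ≤ 1`, `ψ = 0` on an open neighborhood of `S`, `ψ = 1` outside `B`, and
`∫ ‖Dψ‖² ≤ 4ε` (`Dψ = fderiv ℝ ψ`, which is `0` by convention at points of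
non-differentiability). -/
theorem cutoff_construction
    (n : ℕ) (hn : 1 ≤ n)
    (S : Set (EuclideanSpace ℝ (Fin n))) (hS : ZeroCap2 S) :
    ∀ ε > (0:ℝ), ∀ B : Set (EuclideanSpace ℝ (Fin n)), IsOpen B → S ⊆ B →
      ∃ ψ : EuclideanSpace ℝ (Fin n) → ℝ,
        (∃ K, LipschitzWith K ψ) ∧
        (∀ x, 0 ≤ ψ x ∧ ψ x ≤ 1) ∧
        (∃ V, IsOpen V ∧ S ⊆ V ∧ ∀ x ∈ V, ψ x = 0) ∧
        (∀ x ∉ B, ψ x = 1) ∧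
        ∫⁻ x, ENNReal.ofReal (‖fderiv ℝ ψ x‖ ^ 2) ≤ ENNReal.ofReal (4 * ε) :=
  cutoff_construction_general n S hS
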